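/- One-step descent for biased, noisy gradient steps: if f is L-smooth, x⁺ = x − γ·g̃ where E[g̃] satisfies ⟨∇f(x), E[g̃]⟩ ≥ (1−b)‖∇f(x)‖² and E‖g̃‖² ≤ (M_V + (1+b)²)‖∇f(x)‖² + V for constants b ∈ [0,1), M_V, V ≥ 0, and 0 < γ ≤ (1−b)/(L(M_V + (1+b)²)), then E[f(x⁺)] ≤ f(x) − (γ(1−b)/2)‖∇f(x)‖² + (γ²L/2)V. -/

import Mathlib

/-!
Integrate the quadratic upper bound of `L`-smoothness along the step: the linear term is
controlled by the alignment of the mean estimate with the gradient, the quadratic one by the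
second-moment bound, and the step-size condition makes the gradient part of the second moment
cost at most half of the guaranteed first-order decrease.
-/

open MeasureTheory RealInnerProductSpace

section

variable {E : Type*} [NormedAddCommGroup E] [InnerProductSpace ℝ E]

theorem apply_sub_smul_le_of_quadratic_upper_bound {f : E → ℝ} {g x : E} {L : ℝ}
    (hsmooth : ∀ y, f y ≤ f x + ⟪g, y - x⟫ + L / 2 * ‖y - x‖ ^ 2) (γ : ℝ) (v : E) :
    f (x - γ • v) ≤ f x - γ * ⟪g, v⟫ + L / 2 * γ ^ 2 * ‖v‖ ^ 2 := by
  have h := hsmooth (x - γ • v)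
  rw [sub_sub_cancel_left, inner_neg_right, inner_smul_right, norm_neg, norm_smul,
    Real.norm_eq_abs, mul_pow, sq_abs] at h
  linarith

theorem integral_apply_sub_smul_le_of_quadratic_upper_bound [CompleteSpace E]
    {Ω : Type*} [MeasurableSpace Ω] {μ : Measure Ω} [IsProbabilityMeasure μ]
    {f : E → ℝ} {g x : E} {L : ℝ}
    (hsmooth : ∀ y, f y ≤ f x + ⟪g, y - x⟫ + L / 2 * ‖y - x‖ ^ 2) (γ : ℝ) {G : Ω → E}
    (hG : Integrable G μ) (hG_sq : Integrable (fun ω => ‖G ω‖ ^ 2) μ)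
    (hf : Integrable (fun ω => f (x - γ • G ω)) μ) :
    ∫ ω, f (x - γ • G ω) ∂μ ≤ f x - γ * ⟪g, ∫ ω, G ω ∂μ⟫ + L / 2 * γ ^ 2 * ∫ ω, ‖G ω‖ ^ 2 ∂μ := by
  have h_inner : Integrable (fun ω => γ * ⟪g, G ω⟫) μ := (hG.const_inner g).const_mul γ
  have h_affine : Integrable (fun ω => f x - γ * ⟪g, G ω⟫) μ := (integrable_const _).sub h_inner
  calc ∫ ω, f (x - γ • G ω) ∂μ
      ≤ ∫ ω, f x - γ * ⟪g, G ω⟫ + L / 2 * γ ^ 2 * ‖G ω‖ ^ 2 ∂μ :=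
        integral_mono hf (h_affine.add (hG_sq.const_mul _))
          fun ω => apply_sub_smul_le_of_quadratic_upper_bound hsmooth γ (G ω)
    _ = f x - γ * ⟪g, ∫ ω, G ω ∂μ⟫ + L / 2 * γ ^ 2 * ∫ ω, ‖G ω‖ ^ 2 ∂μ := by
        rw [integral_add h_affine (hG_sq.const_mul _),
          integral_sub (integrable_const _) h_inner, integral_const, integral_const_mul,
          integral_const_mul, integral_inner hG, probReal_univ, one_smul]

end

theorem one_step_descent_general (d : ℕ) {Ω : Type*} [MeasureSpace Ω]
    [IsProbabilityMeasure (volume : Measure Ω)]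
    (f : EuclideanSpace ℝ (Fin d) → ℝ)
    (gf : EuclideanSpace ℝ (Fin d) → EuclideanSpace ℝ (Fin d))
    (L b MV V γ : ℝ) (hL : 0 < L) (hb1 : b < 1)
    (hMV : 0 ≤ MV)
    (hsmooth : ∀ x y, f y ≤ f x + ⟪gf x, y - x⟫ + L / 2 * ‖y - x‖ ^ 2)
    (x : EuclideanSpace ℝ (Fin d)) (gtilde : Ω → EuclideanSpace ℝ (Fin d))
    (hint : Integrable gtilde)
    (hsq : Integrable (fun ω => ‖gtilde ω‖ ^ 2))
    (hfint : Integrable (fun ω => f (x - γ • gtilde ω)))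
    (hfirst : (1 - b) * ‖gf x‖ ^ 2 ≤ ⟪gf x, ∫ ω, gtilde ω⟫)
    (hsecond : (∫ ω, ‖gtilde ω‖ ^ 2) ≤ (MV + (1 + b) ^ 2) * ‖gf x‖ ^ 2 + V)
    (hγ0 : 0 < γ) (hγ : γ ≤ (1 - b) / (L * (MV + (1 + b) ^ 2))) :
    (∫ ω, f (x - γ • gtilde ω))
      ≤ f x - γ * (1 - b) / 2 * ‖gf x‖ ^ 2 + γ ^ 2 * L / 2 * V := by
  have hγL : γ * (L * (MV + (1 + b) ^ 2)) ≤ 1 - b :=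
    mul_le_of_le_div₀ (by linarith) (by positivity) hγ
  have hgrad_sq : 0 ≤ γ * ‖gf x‖ ^ 2 := by positivity
  calc (∫ ω, f (x - γ • gtilde ω))
      ≤ f x - γ * ⟪gf x, ∫ ω, gtilde ω⟫ + L / 2 * γ ^ 2 * ∫ ω, ‖gtilde ω‖ ^ 2 :=
        integral_apply_sub_smul_le_of_quadratic_upper_bound (hsmooth x) γ hint hsq hfint
    _ ≤ f x - γ * ((1 - b) * ‖gf x‖ ^ 2)
          + L / 2 * γ ^ 2 * ((MV + (1 + b) ^ 2) * ‖gf x‖ ^ 2 + V) := by gcongr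
    _ ≤ f x - γ * (1 - b) / 2 * ‖gf x‖ ^ 2 + γ ^ 2 * L / 2 * V := by
        nlinarith [mul_le_mul_of_nonneg_left hγL hgrad_sq]

/-- One-step descent for biased, noisy gradient steps on an `L`-smooth function. -/
theorem one_step_descent (d : ℕ) {Ω : Type*} [MeasureSpace Ω]
    [IsProbabilityMeasure (volume : Measure Ω)]
    (f : EuclideanSpace ℝ (Fin d) → ℝ)
    (gf : EuclideanSpace ℝ (Fin d) → EuclideanSpace ℝ (Fin d))
    (L b MV V γ : ℝ) (hL : 0 < L) (hb0 : 0 ≤ b) (hb1 : b < 1)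
    (hMV : 0 ≤ MV) (hV : 0 ≤ V)
    (hgrad : ∀ x, HasGradientAt f (gf x) x)
    (hsmooth : ∀ x y, f y ≤ f x + ⟪gf x, y - x⟫ + L / 2 * ‖y - x‖ ^ 2)
    (x : EuclideanSpace ℝ (Fin d)) (gtilde : Ω → EuclideanSpace ℝ (Fin d))
    (hint : Integrable gtilde)
    (hsq : Integrable (fun ω => ‖gtilde ω‖ ^ 2))
    (hfint : Integrable (fun ω => f (x - γ • gtilde ω)))
    (hfirst : (1 - b) * ‖gf x‖ ^ 2 ≤ ⟪gf x, ∫ ω, gtilde ω⟫)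
    (hsecond : (∫ ω, ‖gtilde ω‖ ^ 2) ≤ (MV + (1 + b) ^ 2) * ‖gf x‖ ^ 2 + V)
    (hγ0 : 0 < γ) (hγ : γ ≤ (1 - b) / (L * (MV + (1 + b) ^ 2))) :
    (∫ ω, f (x - γ • gtilde ω))
      ≤ f x - γ * (1 - b) / 2 * ‖gf x‖ ^ 2 + γ ^ 2 * L / 2 * V :=
  one_step_descent_general d f gf L b MV V γ hL hb1 hMV hsmooth x gtilde hint hsq hfint hfirst
    hsecond hγ0 hγ
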